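/- The linear system γ₁ + γ₂ + ... + γₛ = 1/2 and γ₁ + 2^{-2k}γ₂ + ... + s^{-2k}γₛ = 0 for 1 ≤ k ≤ n-1, with s = n unknowns, has a unique solution (γ₁, ..., γₙ), and in this solution every γₘ is nonzero. -/

import Mathlib

/-!
With nodes `x_m = (m + 1)⁻²`, the system reads `∑ₘ x_mᵏ γ_m = ½ δ_{k0}` for `k < n`: a
transposed Vandermonde system on distinct nodes, hence uniquely solvable. If some `γ_m`
vanished, the equations for `k ≥ 1` would say that the `n - 1` numbers `x_j γ_j`, `j ≠ m`,
solve the homogeneous Vandermonde system on the remaining nodes, so all `γ_j` would vanish,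
contradicting `∑ γ_j = ½`.
-/

open Finset Function

section Vandermonde

variable {K : Type*} [Field K]

theorem existsUnique_sum_pow_mul_eq {n : ℕ} {x : Fin n → K}
    (hx : Injective x) (b : Fin n → K) :
    ∃! γ : Fin n → K, ∀ i : Fin n, ∑ j, x j ^ (i : ℕ) * γ j = b i := by
  have hV : IsUnit (Matrix.vandermonde x) :=
    (Matrix.isUnit_iff_isUnit_det _).2 (Matrix.det_vandermonde_ne_zero_iff.2 hx).isUnit
  have hbij : Bijective (Matrix.vandermonde x).vecMul :=
    ⟨Matrix.vecMul_injective_iff_isUnit.2 hV, Matrix.vecMul_surjective_iff_isUnit.2 hV⟩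
  simpa only [funext_iff, Matrix.vecMul, dotProduct, Matrix.vandermonde_apply, mul_comm] using
    hbij.existsUnique b

theorem existsUnique_sum_eq_and_sum_pow_mul_eq_zero {k : ℕ}
    {x : Fin (k + 1) → K} (hx : Injective x) (c : K) :
    ∃! γ : Fin (k + 1) → K,
      ∑ j, γ j = c ∧ ∀ i : ℕ, 1 ≤ i → i ≤ k → ∑ j, x j ^ i * γ j = 0 := by
  convert existsUnique_sum_pow_mul_eq hx (Pi.single 0 c) using 2 with γ
  rw [Fin.forall_fin_succ]
  simp only [Fin.val_zero, pow_zero, one_mul, Pi.single_eq_same, Fin.val_succ,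
    Pi.single_apply, Fin.succ_ne_zero, if_false]
  refine and_congr_right fun _ => ⟨fun h i => h _ le_add_self (by omega), fun h i hi hik => ?_⟩
  obtain ⟨i, rfl⟩ := Nat.exists_eq_add_of_le' hi
  exact h ⟨i, by omega⟩

theorem ne_zero_of_sum_pow_mul_eq_zero {k : ℕ}
    {x γ : Fin (k + 1) → K} (hx : Injective x) (hx0 : ∀ j, x j ≠ 0) (hγ : ∑ j, γ j ≠ 0)
    (hpow : ∀ i : ℕ, 1 ≤ i → i ≤ k → ∑ j, x j ^ i * γ j = 0) (m : Fin (k + 1)) :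
    γ m ≠ 0 := by
  intro hm
  have hη : (fun j => γ (m.succAbove j) * x (m.succAbove j)) = 0 := by
    refine Matrix.eq_zero_of_forall_pow_sum_mul_pow_eq_zero (f := x ∘ m.succAbove)
      (hx.comp Fin.succAbove_right_injective) fun i => ?_
    have := hpow (i + 1) le_add_self i.isLt
    rw [Fin.sum_univ_succAbove _ m, hm, mul_zero, zero_add] at this
    rw [← this]
    refine sum_congr rfl fun j _ => ?_
    simp only [comp_apply]
    ring
  apply hγ
  rw [Fin.sum_univ_succAbove _ m, hm, zero_add]
  refine sum_eq_zero fun j _ => ?_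
  exact (mul_eq_zero.1 (congrFun hη j)).resolve_right (hx0 _)

end Vandermonde

theorem zpow_neg_two_mul_natCast {K : Type*} [DivisionRing K] (a : K) (i : ℕ) :
    a ^ (-(2 * i : ℤ)) = (a ^ 2)⁻¹ ^ i := by
  rw [zpow_neg, zpow_mul, zpow_ofNat, zpow_natCast, inv_pow]

theorem injective_inv_sq_natCast_add_one :
    Injective fun j : ℕ => (((j : ℝ) + 1) ^ 2)⁻¹ := by
  intro i j h
  have := (pow_left_inj₀ (by positivity) (by positivity) two_ne_zero).1 (inv_injective h)
  exact_mod_cast add_right_cancel this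

/-- The linear system `γ₁ + ⋯ + γₛ = 1/2` and `γ₁ + 2^{-2k}γ₂ + ⋯ + s^{-2k}γₛ = 0`
for `1 ≤ k ≤ n-1`, with `s = n` unknowns, has a unique solution, and every
coordinate of this solution is nonzero. -/
theorem stmt_0 (n : ℕ) (hn : 1 ≤ n) :
    (∃! γ : Fin n → ℝ,
      (∑ m : Fin n, γ m = 1 / 2) ∧
      (∀ k : ℕ, 1 ≤ k → k ≤ n - 1 →
        ∑ m : Fin n, ((m : ℝ) + 1) ^ (-(2 * k : ℤ)) * γ m = 0)) ∧
    (∀ γ : Fin n → ℝ,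
      ((∑ m : Fin n, γ m = 1 / 2) ∧
       (∀ k : ℕ, 1 ≤ k → k ≤ n - 1 →
         ∑ m : Fin n, ((m : ℝ) + 1) ^ (-(2 * k : ℤ)) * γ m = 0)) →
      ∀ m : Fin n, γ m ≠ 0) := by
  obtain ⟨k, rfl⟩ := Nat.exists_eq_add_of_le' hn
  simp only [zpow_neg_two_mul_natCast, add_tsub_cancel_right]
  set x : Fin (k + 1) → ℝ := fun j => (((j : ℝ) + 1) ^ 2)⁻¹
  have hx : Injective x := injective_inv_sq_natCast_add_one.comp Fin.val_injective
  refine ⟨existsUnique_sum_eq_and_sum_pow_mul_eq_zero hx _, fun γ hγ =>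
    ne_zero_of_sum_pow_mul_eq_zero hx (fun j => by positivity) ?_ hγ.2⟩
  rw [hγ.1]
  norm_num
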